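/- arXiv:q-bio/0406024 — 6 statements merged into one kernel-verified Lean document; each statement's English description precedes it below -/
import Mathlib

section
/- Three distinct projective lines in P^3 have linearly dependent Plücker vectors if and only if they are coplanar (all contained in a common 3-dimensional subspace of R^4) and concurrent (all containing a common 1-dimensional subspace of R^4). -/
/-!
Write `p ∧ q` for `plucker p q`. The Klein form pairs Plücker vectors to determinants,
`kleinForm (p ∧ q) (r ∧ s) = det [p, q, r, s]`. Consequently a line is recovered from its Plücker
vector `π` as the set of `v` with `kleinForm (x ∧ v) π = 0` for all `x`, and two lines meet iff
their Plücker vectors are Klein-orthogonal. If `π₀ = a π₁ + b π₂` for distinct lines, then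
`a, b ≠ 0`, and since the Klein quadric vanishes on Plücker vectors, `kleinForm π₁ π₂ = 0`: lines 1
and 2 meet in some `d`. Writing `π₁ = d ∧ x` and `π₂ = d ∧ y` gives `π₀ = d ∧ (a x + b y)`, so
line 0 passes through `d` and lies in the 3-space spanned by lines 1 and 2. Conversely, if the
three lines pass through `d` and lie in a 3-space `W`, then `πᵢ = d ∧ xᵢ` with `xᵢ ∈ W`, and a
linear dependence among the four vectors `d, x₀, x₁, x₂` of `W` is mapped by `d ∧ ·` to one among
the `πᵢ`.
-/

def plucker (p q : Fin 4 → ℝ) : Fin 6 → ℝ :=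
  ![p 0 * q 1 - p 1 * q 0, p 0 * q 2 - p 2 * q 0, p 0 * q 3 - p 3 * q 0,
    p 1 * q 2 - p 2 * q 1, p 1 * q 3 - p 3 * q 1, p 2 * q 3 - p 3 * q 2]

open Submodule Module

theorem linearIndependent_iff_det_ne_zero {K : Type*} [Field K] {n : ℕ}
    (v : Fin n → Fin n → K) : LinearIndependent K v ↔ (Matrix.of v).det ≠ 0 := by
  rw [← isUnit_iff_ne_zero, ← Matrix.isUnit_iff_isUnit_det,
    ← Matrix.linearIndependent_rows_iff_isUnit]
  rfl

theorem finrank_span_pair {K V : Type*} [Field K] [AddCommGroup V] [Module K V] {x y : V}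
    (h : LinearIndependent K ![x, y]) : finrank K (span K {x, y}) = 2 := by
  rw [← Matrix.range_cons_cons_empty x y ![]]
  simpa using finrank_span_eq_card h

theorem finrank_sup_eq_three {K V : Type*} [Field K] [AddCommGroup V] [Module K V]
    {A B : Submodule K V} [FiniteDimensional K A] [FiniteDimensional K B]
    (hA : finrank K A = 2) (hB : finrank K B = 2) (hne : A ≠ B) (hAB : A ⊓ B ≠ ⊥) :
    finrank K ↥(A ⊔ B) = 3 := by
  have hsum := Submodule.finrank_sup_add_finrank_inf_eq A B
  have hpos : finrank K ↥(A ⊓ B) ≠ 0 := fun h => hAB (Submodule.finrank_eq_zero.mp h)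
  have hlt : finrank K ↥(A ⊓ B) < 2 := by
    by_contra! h
    have hleA := Submodule.finrank_mono (inf_le_left : A ⊓ B ≤ A)
    have hleB := Submodule.finrank_mono (inf_le_right : A ⊓ B ≤ B)
    exact hne ((eq_of_le_of_finrank_eq inf_le_left (by omega)).symm.trans
      (eq_of_le_of_finrank_eq inf_le_right (by omega)))
  omega

theorem not_linearIndependent_comp_of_map_eq_zero {K V V' : Type*} [Field K] [AddCommGroup V]
    [Module K V] [AddCommGroup V'] [Module K V'] (f : V →ₗ[K] V') {n : ℕ}
    {U : Submodule K V} [FiniteDimensional K U] (hU : finrank K U ≤ n)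
    {x : Fin n → V} (hx : ∀ i, x i ∈ U) {d : V} (hdU : d ∈ U) (hd : d ≠ 0) (hfd : f d = 0) :
    ¬ LinearIndependent K (f ∘ x) := by
  intro hfx
  have hdx : d ∉ span K (Set.range x) := by
    intro hmem
    obtain ⟨c, rfl⟩ := (mem_span_range_iff_exists_fun K).mp hmem
    have hc : ∀ i, c i = 0 := Fintype.linearIndependent_iff.mp hfx c
      (by simpa only [map_sum, map_smul, Function.comp_apply] using hfd)
    simp [hc] at hd
  have hle : span K (Set.range (Fin.cons d x : Fin (n + 1) → V)) ≤ U := by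
    refine span_le.mpr ?_
    rintro _ ⟨i, rfl⟩
    cases i using Fin.cases <;> simp [hdU, hx]
  have hcard := finrank_span_eq_card ((hfx.of_comp f).finCons hdx)
  have hmono := Submodule.finrank_mono hle
  simp only [Fintype.card_fin] at hcard
  omega

lemma plucker_add_left (p p' q : Fin 4 → ℝ) :
    plucker (p + p') q = plucker p q + plucker p' q := by
  ext i; fin_cases i <;> simp [plucker] <;> ring

lemma plucker_smul_left (c : ℝ) (p q : Fin 4 → ℝ) : plucker (c • p) q = c • plucker p q := by
  ext i; fin_cases i <;> simp [plucker] <;> ring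

lemma plucker_add_right (p q q' : Fin 4 → ℝ) :
    plucker p (q + q') = plucker p q + plucker p q' := by
  ext i; fin_cases i <;> simp [plucker] <;> ring

lemma plucker_smul_right (c : ℝ) (p q : Fin 4 → ℝ) : plucker p (c • q) = c • plucker p q := by
  ext i; fin_cases i <;> simp [plucker] <;> ring

lemma plucker_self (p : Fin 4 → ℝ) : plucker p p = 0 := by
  ext i; fin_cases i <;> simp [plucker] <;> ring

lemma plucker_swap (p q : Fin 4 → ℝ) : plucker q p = -plucker p q := by
  ext i; fin_cases i <;> simp [plucker] <;> ring

lemma plucker_zero_left (q : Fin 4 → ℝ) : plucker 0 q = 0 := by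
  simpa using plucker_smul_left 0 0 q

def pluckerBilin : (Fin 4 → ℝ) →ₗ[ℝ] (Fin 4 → ℝ) →ₗ[ℝ] (Fin 6 → ℝ) :=
  LinearMap.mk₂ ℝ plucker plucker_add_left plucker_smul_left plucker_add_right
    plucker_smul_right

/-- Coordinates are indexed as in `plucker` by the pairs `01, 02, 03, 12, 13, 23`; each pair is
paired with its complement, signed by the sign of the resulting permutation of `0123`. -/
def kleinForm : LinearMap.BilinForm ℝ (Fin 6 → ℝ) :=
  LinearMap.mk₂ ℝ
    (fun m n => m 0 * n 5 - m 1 * n 4 + m 2 * n 3 + m 3 * n 2 - m 4 * n 1 + m 5 * n 0)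
    (fun _ _ _ => by simp only [Pi.add_apply]; ring)
    (fun _ _ _ => by simp only [Pi.smul_apply, smul_eq_mul]; ring)
    (fun _ _ _ => by simp only [Pi.add_apply]; ring)
    (fun _ _ _ => by simp only [Pi.smul_apply, smul_eq_mul]; ring)

lemma kleinForm_comm (m n : Fin 6 → ℝ) : kleinForm m n = kleinForm n m := by
  simp only [kleinForm, LinearMap.mk₂_apply]; ring

theorem kleinForm_plucker_plucker (p q r s : Fin 4 → ℝ) :
    kleinForm (plucker p q) (plucker r s) = (Matrix.of ![p, q, r, s]).det := by
  simp [kleinForm, plucker, Matrix.det_succ_row_zero, Fin.sum_univ_succ, Fin.succAbove]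
  ring

lemma kleinForm_plucker_self (p q : Fin 4 → ℝ) :
    kleinForm (plucker p q) (plucker p q) = 0 := by
  rw [kleinForm_plucker_plucker]
  exact Matrix.det_zero_of_row_eq (i := 0) (j := 2) (by decide) rfl

theorem mem_span_pair_iff_forall_kleinForm_eq_zero {p q v : Fin 4 → ℝ}
    (hpq : LinearIndependent ℝ ![p, q]) :
    v ∈ span ℝ {p, q} ↔ ∀ x, kleinForm (plucker x v) (plucker p q) = 0 := by
  constructor
  · intro hv x
    obtain ⟨a, b, rfl⟩ := mem_span_pair.mp hv
    have hp : kleinForm (plucker x p) (plucker p q) = 0 := by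
      rw [kleinForm_plucker_plucker]
      exact Matrix.det_zero_of_row_eq (i := 1) (j := 2) (by decide) rfl
    have hq : kleinForm (plucker x q) (plucker p q) = 0 := by
      rw [kleinForm_plucker_plucker]
      exact Matrix.det_zero_of_row_eq (i := 1) (j := 3) (by decide) rfl
    simp [plucker_add_right, plucker_smul_right, hp, hq]
  · intro h
    by_contra hv
    have hvpq : LinearIndependent ℝ ![v, p, q] :=
      hpq.finCons (by rwa [Matrix.range_cons_cons_empty])
    have hlt : span ℝ (Set.range ![v, p, q]) < ⊤ := by
      refine lt_top_iff_ne_top.mpr fun htop => ?_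
      have := finrank_span_eq_card hvpq
      rw [htop, finrank_top, Module.finrank_fin_fun] at this
      simp at this
    obtain ⟨x, -, hx⟩ := SetLike.exists_of_lt hlt
    have hdet : (Matrix.of ![x, v, p, q]).det ≠ 0 :=
      (linearIndependent_iff_det_ne_zero _).mp (hvpq.finCons hx)
    exact hdet (by rw [← kleinForm_plucker_plucker]; exact h x)

theorem plucker_ne_zero {p q : Fin 4 → ℝ} (h : LinearIndependent ℝ ![p, q]) :
    plucker p q ≠ 0 := by
  intro h0
  have htop : span ℝ {p, q} = ⊤ := eq_top_iff.mpr fun v _ =>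
    (mem_span_pair_iff_forall_kleinForm_eq_zero h).mpr fun x => by simp [h0]
  have := finrank_span_pair h
  rw [htop, finrank_top, Module.finrank_fin_fun] at this
  norm_num at this

theorem linearIndependent_of_plucker_ne_zero {p q : Fin 4 → ℝ} (h : plucker p q ≠ 0) :
    LinearIndependent ℝ ![p, q] := by
  refine LinearIndependent.pair_iff.mpr fun s t hst => ?_
  have hs : s • plucker p q = 0 := calc
    s • plucker p q = plucker (s • p + t • q) q := by
      rw [plucker_add_left, plucker_smul_left, plucker_smul_left, plucker_self, smul_zero,
        add_zero]
    _ = 0 := by rw [hst, plucker_zero_left]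
  have ht : t • plucker p q = 0 := calc
    t • plucker p q = plucker p (s • p + t • q) := by
      rw [plucker_add_right, plucker_smul_right, plucker_smul_right, plucker_self, smul_zero,
        zero_add]
    _ = 0 := by rw [hst, plucker_swap, plucker_zero_left, neg_zero]
  exact ⟨(smul_eq_zero.mp hs).resolve_right h, (smul_eq_zero.mp ht).resolve_right h⟩

theorem span_pair_eq_of_plucker_eq_smul {p q r s : Fin 4 → ℝ}
    (hpq : LinearIndependent ℝ ![p, q]) {c : ℝ} (hc : c ≠ 0)
    (h : plucker r s = c • plucker p q) : span ℝ {r, s} = span ℝ {p, q} := by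
  have hrs : LinearIndependent ℝ ![r, s] :=
    linearIndependent_of_plucker_ne_zero (by rw [h]; exact smul_ne_zero hc (plucker_ne_zero hpq))
  refine eq_of_le_of_finrank_eq (span_le.mpr fun v hv => ?_)
    (by rw [finrank_span_pair hrs, finrank_span_pair hpq])
  refine (mem_span_pair_iff_forall_kleinForm_eq_zero hpq).mpr fun x => ?_
  have hx := (mem_span_pair_iff_forall_kleinForm_eq_zero hrs).mp (subset_span hv) x
  rw [h, map_smul, smul_eq_zero] at hx
  exact hx.resolve_left hc

theorem linearIndependent_plucker_pair {p q r s : Fin 4 → ℝ}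
    (hpq : LinearIndependent ℝ ![p, q]) (hrs : LinearIndependent ℝ ![r, s])
    (hne : span ℝ {p, q} ≠ span ℝ {r, s}) :
    LinearIndependent ℝ ![plucker p q, plucker r s] := by
  refine (LinearIndependent.pair_iff' (plucker_ne_zero hpq)).mpr fun a ha => hne ?_
  have ha0 : a ≠ 0 := by
    rintro rfl
    exact plucker_ne_zero hrs (by rw [← ha, zero_smul])
  exact (span_pair_eq_of_plucker_eq_smul hpq ha0 ha.symm).symm

theorem kleinForm_eq_zero_of_plucker_eq_add {p q r s u w : Fin 4 → ℝ} {a b : ℝ}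
    (ha : a ≠ 0) (hb : b ≠ 0) (h : plucker p q = a • plucker r s + b • plucker u w) :
    kleinForm (plucker r s) (plucker u w) = 0 := by
  have h0 := kleinForm_plucker_self p q
  simp only [h, map_add, map_smul, LinearMap.add_apply, LinearMap.smul_apply, smul_eq_mul,
    kleinForm_plucker_self] at h0
  rw [kleinForm_comm (plucker u w)] at h0
  have h2 : (2 * a * b) * kleinForm (plucker r s) (plucker u w) = 0 := by
    linear_combination h0
  simpa [ha, hb] using h2

theorem span_pair_inf_ne_bot_of_kleinForm_eq_zero {p q r s : Fin 4 → ℝ}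
    (hpq : LinearIndependent ℝ ![p, q]) (hrs : LinearIndependent ℝ ![r, s])
    (h : kleinForm (plucker p q) (plucker r s) = 0) :
    span ℝ {p, q} ⊓ span ℝ {r, s} ≠ ⊥ := by
  have hdep : ¬ LinearIndependent ℝ ![p, q, r, s] := by
    rw [linearIndependent_iff_det_ne_zero, ← kleinForm_plucker_plucker, not_not]
    exact h
  obtain ⟨g, hg, i, hi⟩ := Fintype.not_linearIndependent_iff.mp hdep
  simp only [Fin.sum_univ_four, Matrix.cons_val] at hg
  refine (Submodule.ne_bot_iff _).mpr
    ⟨g 0 • p + g 1 • q, mem_inf.mpr ⟨?_, ?_⟩, fun h0 => ?_⟩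
  · exact mem_span_pair.mpr ⟨_, _, rfl⟩
  · exact mem_span_pair.mpr ⟨-g 2, -g 3, by linear_combination (norm := module) -hg⟩
  · obtain ⟨h0, h1⟩ := LinearIndependent.pair_iff.mp hpq _ _ h0
    obtain ⟨h2, h3⟩ :=
      LinearIndependent.pair_iff.mp hrs (g 2) (g 3) (by simpa [h0, h1] using hg)
    fin_cases i <;> simp_all

theorem exists_plucker_eq_of_mem_span_pair {p q d : Fin 4 → ℝ} (hd : d ≠ 0)
    (hdpq : d ∈ span ℝ {p, q}) : ∃ x ∈ span ℝ {p, q}, plucker d x = plucker p q := by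
  obtain ⟨a, b, rfl⟩ := mem_span_pair.mp hdpq
  by_cases ha : a = 0
  · have hb : b ≠ 0 := by rintro rfl; simp [ha] at hd
    refine ⟨(-b⁻¹) • p, smul_mem _ _ (subset_span (by simp)), ?_⟩
    simp only [ha, zero_smul, zero_add, plucker_smul_left, plucker_smul_right, smul_smul,
      plucker_swap q p]
    rw [neg_mul, inv_mul_cancel₀ hb, neg_one_smul]
  · refine ⟨a⁻¹ • q, smul_mem _ _ (subset_span (by simp)), ?_⟩
    simp [plucker_add_left, plucker_smul_left, plucker_smul_right, plucker_self, ha]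

theorem coplanar_concurrent_of_plucker_eq_add {p q : Fin 3 → Fin 4 → ℝ}
    (hli : ∀ i, LinearIndependent ℝ ![p i, q i])
    (hdist : ∀ i j, i ≠ j → span ℝ {p i, q i} ≠ span ℝ {p j, q j}) {a b : ℝ}
    (h : plucker (p 0) (q 0) = a • plucker (p 1) (q 1) + b • plucker (p 2) (q 2)) :
    (∃ W : Submodule ℝ (Fin 4 → ℝ), finrank ℝ W = 3 ∧ ∀ i, span ℝ {p i, q i} ≤ W) ∧
      ∃ d : Fin 4 → ℝ, d ≠ 0 ∧ ∀ i, d ∈ span ℝ {p i, q i} := by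
  have ha : a ≠ 0 := by
    rintro rfl
    have hb : b ≠ 0 := by rintro rfl; exact plucker_ne_zero (hli 0) (by simpa using h)
    exact hdist 0 2 (by decide) (span_pair_eq_of_plucker_eq_smul (hli 2) hb (by simpa using h))
  have hb : b ≠ 0 := by
    rintro rfl
    exact hdist 0 1 (by decide) (span_pair_eq_of_plucker_eq_smul (hli 1) ha (by simpa using h))
  have hmeet := span_pair_inf_ne_bot_of_kleinForm_eq_zero (hli 1) (hli 2)
    (kleinForm_eq_zero_of_plucker_eq_add ha hb h)
  obtain ⟨d, hd, hd0⟩ := (Submodule.ne_bot_iff _).mp hmeet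
  obtain ⟨hd1, hd2⟩ := mem_inf.mp hd
  obtain ⟨x, hx, hdx⟩ := exists_plucker_eq_of_mem_span_pair hd0 hd1
  obtain ⟨y, hy, hdy⟩ := exists_plucker_eq_of_mem_span_pair hd0 hd2
  have hL0 : span ℝ {d, a • x + b • y} = span ℝ {p 0, q 0} :=
    span_pair_eq_of_plucker_eq_smul (hli 0) one_ne_zero (by
      rw [one_smul, h, plucker_add_right, plucker_smul_right, plucker_smul_right, hdx, hdy])
  have hW := finrank_sup_eq_three (finrank_span_pair (hli 1)) (finrank_span_pair (hli 2))
    (hdist 1 2 (by decide)) hmeet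
  refine ⟨⟨_, hW, fun i => ?_⟩, d, hd0, fun i => ?_⟩
  · fin_cases i
    · show span ℝ {p 0, q 0} ≤ _
      rw [← hL0, span_le, Set.insert_subset_iff, Set.singleton_subset_iff]
      exact ⟨mem_sup_left hd1,
        add_mem (smul_mem _ _ (mem_sup_left hx)) (smul_mem _ _ (mem_sup_right hy))⟩
    · exact le_sup_left
    · exact le_sup_right
  · fin_cases i
    · show d ∈ span ℝ {p 0, q 0}
      rw [← hL0]
      exact subset_span (by simp)
    · exact hd1
    · exact hd2

theorem three_lines_dependent_iff_coplanar_concurrent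
    (p q : Fin 3 → (Fin 4 → ℝ))
    (hli : ∀ i, LinearIndependent ℝ ![p i, q i])
    (hdist : ∀ i j, i ≠ j →
      Submodule.span ℝ {p i, q i} ≠ Submodule.span ℝ {p j, q j}) :
    ¬ LinearIndependent ℝ (fun i : Fin 3 => plucker (p i) (q i)) ↔
      ((∃ W : Submodule ℝ (Fin 4 → ℝ), Module.finrank ℝ W = 3 ∧
          ∀ i, Submodule.span ℝ {p i, q i} ≤ W) ∧
       (∃ d : Fin 4 → ℝ, d ≠ 0 ∧
          ∀ i, d ∈ Submodule.span ℝ {p i, q i})) := by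
  constructor
  · intro hdep
    have hfam : (fun i : Fin 3 => plucker (p i) (q i)) =
        Fin.cons (plucker (p 0) (q 0)) ![plucker (p 1) (q 1), plucker (p 2) (q 2)] := by
      ext i : 1; fin_cases i <;> rfl
    rw [hfam, linearIndependent_finCons, Matrix.range_cons_cons_empty, not_and, not_not] at hdep
    obtain ⟨a, b, hab⟩ := mem_span_pair.mp
      (hdep (linearIndependent_plucker_pair (hli 1) (hli 2) (hdist 1 2 (by decide))))
    exact coplanar_concurrent_of_plucker_eq_add hli hdist hab.symm
  · rintro ⟨⟨W, hW, hLW⟩, d, hd0, hd⟩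
    choose x hx hdx using fun i => exists_plucker_eq_of_mem_span_pair hd0 (hd i)
    have hfam : (fun i => plucker (p i) (q i)) = pluckerBilin d ∘ x := by
      ext i : 1; exact (hdx i).symm
    rw [hfam]
    exact not_linearIndependent_comp_of_map_eq_zero (pluckerBilin d) hW.le
      (fun i => hLW i (hx i)) (hLW 0 (hd 0)) hd0 (plucker_self d)
end

section
/- In the setting of two triples of concurrent non-coplanar lines through distinct points w and s, the six Plücker vectors are linearly dependent, and the line through w and s lies in both the span of {W1,W2,W3} and the span of {S1,S2,S3}. -/
lemma plucker_anti (w s : Fin 4 → ℝ) : plucker s w = -plucker w s := by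
  funext k
  fin_cases k
  · show s 0 * w 1 - s 1 * w 0 = -(w 0 * s 1 - w 1 * s 0); ring
  · show s 0 * w 2 - s 2 * w 0 = -(w 0 * s 2 - w 2 * s 0); ring
  · show s 0 * w 3 - s 3 * w 0 = -(w 0 * s 3 - w 3 * s 0); ring
  · show s 1 * w 2 - s 2 * w 1 = -(w 1 * s 2 - w 2 * s 1); ring
  · show s 1 * w 3 - s 3 * w 1 = -(w 1 * s 3 - w 3 * s 1); ring
  · show s 2 * w 3 - s 3 * w 2 = -(w 2 * s 3 - w 3 * s 2); ring

lemma plucker_comb (w : Fin 4 → ℝ) (q : Fin 3 → (Fin 4 → ℝ)) (v : Fin 4 → ℝ)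
    (h : Submodule.span ℝ {w, q 0, q 1, q 2} = ⊤) :
    ∃ c : Fin 3 → ℝ, plucker w v =
      c 0 • plucker w (q 0) + c 1 • plucker w (q 1) + c 2 • plucker w (q 2) := by
  have hv : v ∈ Submodule.span ℝ (Set.range ![w, q 0, q 1, q 2]) := by
    have hr : Set.range ![w, q 0, q 1, q 2] = {w, q 0, q 1, q 2} := by
      ext x; simp [Matrix.range_cons, Matrix.range_empty]; tauto
    rw [hr, h]; trivial
  obtain ⟨c, hc⟩ := (Submodule.mem_span_range_iff_exists_fun ℝ).mp hv
  have hvk : ∀ i, v i = c 0 * w i + c 1 * q 0 i + c 2 * q 1 i + c 3 * q 2 i := by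
    intro i
    rw [← hc, Fin.sum_univ_four]
    rfl
  refine ⟨![c 1, c 2, c 3], ?_⟩
  funext k
  fin_cases k
  · show w 0 * v 1 - w 1 * v 0 = c 1 * (w 0 * q 0 1 - w 1 * q 0 0) + c 2 * (w 0 * q 1 1 - w 1 * q 1 0) + c 3 * (w 0 * q 2 1 - w 1 * q 2 0)
    simp only [hvk]; ring
  · show w 0 * v 2 - w 2 * v 0 = c 1 * (w 0 * q 0 2 - w 2 * q 0 0) + c 2 * (w 0 * q 1 2 - w 2 * q 1 0) + c 3 * (w 0 * q 2 2 - w 2 * q 2 0)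
    simp only [hvk]; ring
  · show w 0 * v 3 - w 3 * v 0 = c 1 * (w 0 * q 0 3 - w 3 * q 0 0) + c 2 * (w 0 * q 1 3 - w 3 * q 1 0) + c 3 * (w 0 * q 2 3 - w 3 * q 2 0)
    simp only [hvk]; ring
  · show w 1 * v 2 - w 2 * v 1 = c 1 * (w 1 * q 0 2 - w 2 * q 0 1) + c 2 * (w 1 * q 1 2 - w 2 * q 1 1) + c 3 * (w 1 * q 2 2 - w 2 * q 2 1)
    simp only [hvk]; ring
  · show w 1 * v 3 - w 3 * v 1 = c 1 * (w 1 * q 0 3 - w 3 * q 0 1) + c 2 * (w 1 * q 1 3 - w 3 * q 1 1) + c 3 * (w 1 * q 2 3 - w 3 * q 2 1)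
    simp only [hvk]; ring
  · show w 2 * v 3 - w 3 * v 2 = c 1 * (w 2 * q 0 3 - w 3 * q 0 2) + c 2 * (w 2 * q 1 3 - w 3 * q 1 2) + c 3 * (w 2 * q 2 3 - w 3 * q 2 2)
    simp only [hvk]; ring

lemma plucker_ne_zero_s11 (w s : Fin 4 → ℝ) (hws : LinearIndependent ℝ ![w, s]) :
    plucker w s ≠ 0 := by
  intro h0
  have h1 : w 0 * s 1 - w 1 * s 0 = 0 := congrFun h0 0
  have h2 : w 0 * s 2 - w 2 * s 0 = 0 := congrFun h0 1
  have h3 : w 0 * s 3 - w 3 * s 0 = 0 := congrFun h0 2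
  have h4 : w 1 * s 2 - w 2 * s 1 = 0 := congrFun h0 3
  have h5 : w 1 * s 3 - w 3 * s 1 = 0 := congrFun h0 4
  have h6 : w 2 * s 3 - w 3 * s 2 = 0 := congrFun h0 5
  have key : ∀ i j : Fin 4, w i * s j - w j * s i = 0 := by
    intro i j
    fin_cases i <;> fin_cases j
    · show w 0 * s 0 - w 0 * s 0 = 0; ring
    · show w 0 * s 1 - w 1 * s 0 = 0; linarith [h1]
    · show w 0 * s 2 - w 2 * s 0 = 0; linarith [h2]
    · show w 0 * s 3 - w 3 * s 0 = 0; linarith [h3]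
    · show w 1 * s 0 - w 0 * s 1 = 0; linarith [h1]
    · show w 1 * s 1 - w 1 * s 1 = 0; ring
    · show w 1 * s 2 - w 2 * s 1 = 0; linarith [h4]
    · show w 1 * s 3 - w 3 * s 1 = 0; linarith [h5]
    · show w 2 * s 0 - w 0 * s 2 = 0; linarith [h2]
    · show w 2 * s 1 - w 1 * s 2 = 0; linarith [h4]
    · show w 2 * s 2 - w 2 * s 2 = 0; ring
    · show w 2 * s 3 - w 3 * s 2 = 0; linarith [h6]
    · show w 3 * s 0 - w 0 * s 3 = 0; linarith [h3]
    · show w 3 * s 1 - w 1 * s 3 = 0; linarith [h5]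
    · show w 3 * s 2 - w 2 * s 3 = 0; linarith [h6]
    · show w 3 * s 3 - w 3 * s 3 = 0; ring
  have hw : w ≠ 0 := by
    have := hws.ne_zero 0; simpa using this
  obtain ⟨j, hj⟩ := Function.ne_iff.mp hw
  simp only [Pi.zero_apply] at hj
  have hz : s j • w + (-(w j)) • s = 0 := by
    funext i
    show s j * w i + -(w j) * s i = 0
    linear_combination key i j
  have := (LinearIndependent.pair_iff.mp hws) (s j) (-(w j)) hz
  exact hj (neg_eq_zero.mp this.2)

theorem two_joints_dependent_and_common_line (w s : Fin 4 → ℝ)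
    (qW qS : Fin 3 → (Fin 4 → ℝ))
    (hws : LinearIndependent ℝ ![w, s])
    (hliW : ∀ i, LinearIndependent ℝ ![w, qW i])
    (hliS : ∀ i, LinearIndependent ℝ ![s, qS i])
    (hncopW : Submodule.span ℝ {w, qW 0, qW 1, qW 2} = ⊤)
    (hncopS : Submodule.span ℝ {s, qS 0, qS 1, qS 2} = ⊤) :
    ¬ LinearIndependent ℝ
      ![plucker w (qW 0), plucker w (qW 1), plucker w (qW 2),
        plucker s (qS 0), plucker s (qS 1), plucker s (qS 2)] ∧
    plucker w s ∈ Submodule.span ℝ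
      {plucker w (qW 0), plucker w (qW 1), plucker w (qW 2)} ∧
    plucker w s ∈ Submodule.span ℝ
      {plucker s (qS 0), plucker s (qS 1), plucker s (qS 2)} := by
  obtain ⟨b, hb⟩ := plucker_comb w qW s hncopW
  obtain ⟨d, hd⟩ := plucker_comb s qS w hncopS
  have hne := plucker_ne_zero_s11 w s hws
  have anti := plucker_anti w s
  have h2 : b 0 • plucker w (qW 0) + b 1 • plucker w (qW 1) + b 2 • plucker w (qW 2) +
      (d 0 • plucker s (qS 0) + d 1 • plucker s (qS 1) + d 2 • plucker s (qS 2)) = 0 := by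
    rw [← hb, ← hd, anti, add_neg_cancel]
  refine ⟨?_, ?_, ?_⟩
  · intro h
    have hsum : ∑ i, (![b 0, b 1, b 2, d 0, d 1, d 2]) i •
        (![plucker w (qW 0), plucker w (qW 1), plucker w (qW 2),
           plucker s (qS 0), plucker s (qS 1), plucker s (qS 2)]) i = 0 := by
      rw [Fin.sum_univ_six]
      show b 0 • plucker w (qW 0) + b 1 • plucker w (qW 1) + b 2 • plucker w (qW 2) +
        d 0 • plucker s (qS 0) + d 1 • plucker s (qS 1) + d 2 • plucker s (qS 2) = 0
      simp only [add_assoc] at h2 ⊢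
      exact h2
    have hcoef := Fintype.linearIndependent_iff.mp h ![b 0, b 1, b 2, d 0, d 1, d 2] hsum
    have hb0 : b 0 = 0 := hcoef 0
    have hb1 : b 1 = 0 := hcoef 1
    have hb2 : b 2 = 0 := hcoef 2
    apply hne
    rw [hb, hb0, hb1, hb2]
    simp
  · rw [hb]
    refine add_mem (add_mem ?_ ?_) ?_ <;>
      exact Submodule.smul_mem _ _ (Submodule.subset_span (by simp))
  · have hws' : plucker w s = -(d 0 • plucker s (qS 0) + d 1 • plucker s (qS 1) +
        d 2 • plucker s (qS 2)) := by
      rw [← hd, anti, neg_neg]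
    rw [hws']
    refine neg_mem ?_
    refine add_mem (add_mem ?_ ?_) ?_ <;>
      exact Submodule.smul_mem _ _ (Submodule.subset_span (by simp))
end

section
/- In the bowling model, the 6×6 motion matrix M with columns (0,0,1,0,0,0), (0,0,0,0,1,0), (0,0,0,0,0,1), (−a1,a1,a1,b1+c1,b1,c1), (−a2,a2,a2,b2+c2,b2,c2), (−a3,a3,a3,b3+c3,b3,c3), where the vectors (ai,bi,ci) for i = 1,2,3 are linearly independent in R^3, has rank exactly 5, and its column space is exactly the hyperplane {v ∈ R^6 : v1 + v2 = 0}. -/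
lemma Matrix.cons_val_five' (x : ℝ) (u : Fin 5 → ℝ) :
    Matrix.vecCons x u 5 = Matrix.vecHead (Matrix.vecTail (Matrix.vecTail
      (Matrix.vecTail (Matrix.vecTail u)))) := rfl

set_option maxHeartbeats 1000000 in
theorem motion_matrix_rank_five (a b c : Fin 3 → ℝ)
    (hli : LinearIndependent ℝ (fun i : Fin 3 => ![a i, b i, c i])) :
    Module.finrank ℝ (Submodule.span ℝ
      ({![0,0,1,0,0,0], ![0,0,0,0,1,0], ![0,0,0,0,0,1],
        ![-(a 0), a 0, a 0, b 0 + c 0, b 0, c 0],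
        ![-(a 1), a 1, a 1, b 1 + c 1, b 1, c 1],
        ![-(a 2), a 2, a 2, b 2 + c 2, b 2, c 2]} : Set (Fin 6 → ℝ))) = 5 ∧
    Submodule.span ℝ
      ({![0,0,1,0,0,0], ![0,0,0,0,1,0], ![0,0,0,0,0,1],
        ![-(a 0), a 0, a 0, b 0 + c 0, b 0, c 0],
        ![-(a 1), a 1, a 1, b 1 + c 1, b 1, c 1],
        ![-(a 2), a 2, a 2, b 2 + c 2, b 2, c 2]} : Set (Fin 6 → ℝ)) =
      LinearMap.ker (LinearMap.proj (R := ℝ) (φ := fun _ : Fin 6 => ℝ) 0 +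
        LinearMap.proj (R := ℝ) (φ := fun _ : Fin 6 => ℝ) 1) := by
  set φ : (Fin 6 → ℝ) →ₗ[ℝ] ℝ :=
    LinearMap.proj (R := ℝ) (φ := fun _ : Fin 6 => ℝ) 0 +
      LinearMap.proj (R := ℝ) (φ := fun _ : Fin 6 => ℝ) 1 with hφ
  set G : Set (Fin 6 → ℝ) :=
      ({![0,0,1,0,0,0], ![0,0,0,0,1,0], ![0,0,0,0,0,1],
        ![-(a 0), a 0, a 0, b 0 + c 0, b 0, c 0],
        ![-(a 1), a 1, a 1, b 1 + c 1, b 1, c 1],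
        ![-(a 2), a 2, a 2, b 2 + c 2, b 2, c 2]} : Set (Fin 6 → ℝ)) with hG
  set S : Submodule ℝ (Fin 6 → ℝ) := Submodule.span ℝ G with hS
  have hb : Fintype.card (Fin 3) = Module.finrank ℝ (Fin 3 → ℝ) := by simp
  let B := basisOfLinearIndependentOfCardEqFinrank hli hb
  have hB : ∀ i, B i = ![a i, b i, c i] := fun i => by
    simp [B, coe_basisOfLinearIndependentOfCardEqFinrank]
  have hsolve : ∀ t1 t2 : ℝ, ∃ l : Fin 3 → ℝ,
      (l 0 * a 0 + l 1 * a 1 + l 2 * a 2 = t1) ∧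
      (l 0 * b 0 + l 1 * b 1 + l 2 * b 2 = t2) ∧
      (l 0 * c 0 + l 1 * c 1 + l 2 * c 2 = 0) := by
    intro t1 t2
    refine ⟨fun i => B.repr ![t1, t2, 0] i, ?_, ?_, ?_⟩
    · have h := congrFun (B.sum_repr ![t1, t2, 0]) 0
      simpa [Fin.sum_univ_three, hB] using h
    · have h := congrFun (B.sum_repr ![t1, t2, 0]) 1
      simpa [Fin.sum_univ_three, hB] using h
    · have h := congrFun (B.sum_repr ![t1, t2, 0]) 2
      simpa [Fin.sum_univ_three, hB] using h
  set u : Fin 6 → ℝ := ![-1,1,0,0,0,0] with hu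
  set e2 : Fin 6 → ℝ := ![0,0,1,0,0,0] with he2
  set e3 : Fin 6 → ℝ := ![0,0,0,1,0,0] with he3
  set e4 : Fin 6 → ℝ := ![0,0,0,0,1,0] with he4
  set e5 : Fin 6 → ℝ := ![0,0,0,0,0,1] with he5
  have hmem : ∀ v ∈ G, v ∈ S := fun v hv => Submodule.subset_span hv
  have he2S : e2 ∈ S := hmem _ (by simp [hG])
  have he4S : e4 ∈ S := hmem _ (by simp [hG])
  have he5S : e5 ∈ S := hmem _ (by simp [hG])
  have hwS : ∀ i : Fin 3, ![-(a i), a i, a i, b i + c i, b i, c i] ∈ S := by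
    intro i
    fin_cases i <;> exact hmem _ (by simp [hG])
  have hkey : ∀ i : Fin 3, (a i) • u + (b i + c i) • e3 ∈ S := by
    intro i
    have heq : (a i) • u + (b i + c i) • e3 =
        ![-(a i), a i, a i, b i + c i, b i, c i]
          - (a i) • e2 - (b i) • e4 - (c i) • e5 := by
      funext j
      fin_cases j <;> simp [hu, he2, he3, he4, he5, Matrix.cons_val_five'] <;> ring
    rw [heq]
    exact sub_mem (sub_mem (sub_mem (hwS i) (Submodule.smul_mem _ _ he2S))
      (Submodule.smul_mem _ _ he4S)) (Submodule.smul_mem _ _ he5S)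
  have huS : u ∈ S := by
    obtain ⟨l, h1, h2, h3⟩ := hsolve 1 0
    have heq : u = l 0 • ((a 0) • u + (b 0 + c 0) • e3)
        + l 1 • ((a 1) • u + (b 1 + c 1) • e3)
        + l 2 • ((a 2) • u + (b 2 + c 2) • e3) := by
      funext j
      fin_cases j <;> simp [hu, he3, Matrix.cons_val_five'] <;>
        first
          | linear_combination -h1
          | linear_combination h1
          | linear_combination h2 + h3
          | linear_combination -(h2 + h3)
          | ring
    rw [heq]
    exact add_mem (add_mem (Submodule.smul_mem _ _ (hkey 0))
      (Submodule.smul_mem _ _ (hkey 1))) (Submodule.smul_mem _ _ (hkey 2))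
  have he3S : e3 ∈ S := by
    obtain ⟨l, h1, h2, h3⟩ := hsolve 0 1
    have heq : e3 = l 0 • ((a 0) • u + (b 0 + c 0) • e3)
        + l 1 • ((a 1) • u + (b 1 + c 1) • e3)
        + l 2 • ((a 2) • u + (b 2 + c 2) • e3) := by
      funext j
      fin_cases j <;> simp [hu, he3, Matrix.cons_val_five'] <;>
        first
          | linear_combination -h1
          | linear_combination h1
          | linear_combination h2 + h3
          | linear_combination -(h2 + h3)
          | ring
    rw [heq]
    exact add_mem (add_mem (Submodule.smul_mem _ _ (hkey 0))
      (Submodule.smul_mem _ _ (hkey 1))) (Submodule.smul_mem _ _ (hkey 2))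
  have hSker : S = LinearMap.ker φ := by
    apply le_antisymm
    · rw [hS, Submodule.span_le]
      intro v hv
      simp only [hG, Set.mem_insert_iff, Set.mem_singleton_iff] at hv
      rcases hv with h | h | h | h | h | h <;>
        · subst h
          simp [LinearMap.mem_ker, hφ, he2, he4, he5, Matrix.cons_val_five']
    · intro v hv
      rw [LinearMap.mem_ker, hφ] at hv
      simp only [LinearMap.add_apply, LinearMap.proj_apply] at hv
      have heq : v = (v 1) • u + (v 2) • e2 + (v 3) • e3 + (v 4) • e4
          + (v 5) • e5 := by
        funext j
        fin_cases j <;> simp [hu, he2, he3, he4, he5, Matrix.cons_val_five'] <;> linarith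
      rw [heq]
      exact add_mem (add_mem (add_mem (add_mem (Submodule.smul_mem _ _ huS)
        (Submodule.smul_mem _ _ he2S)) (Submodule.smul_mem _ _ he3S))
        (Submodule.smul_mem _ _ he4S)) (Submodule.smul_mem _ _ he5S)
  refine ⟨?_, hSker⟩
  have hrange : LinearMap.range φ = ⊤ := by
    rw [LinearMap.range_eq_top]
    intro r
    exact ⟨![r, 0, 0, 0, 0, 0], by simp [hφ]⟩
  have hrn : Module.finrank ℝ (LinearMap.range φ) +
      Module.finrank ℝ (LinearMap.ker φ) = 6 := by
    have h := LinearMap.finrank_range_add_finrank_ker φ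
    simpa using h
  rw [hrange] at hrn
  rw [finrank_top, Module.finrank_self] at hrn
  rw [hSker]
  omega
end

section
/- In the bowling model, the Plücker vector X = (0,0,1,0,0,0) of the waist axis in the x-direction never appears in the support of the (unique up to scalar) linear dependency among the six joint-axis Plücker vectors; i.e., in any linear dependency α·X + β·Y + γ·Z + σ1·S1 + σ2·S2 + σ3·S3 = 0 with not all coefficients zero, the coefficient α of X is zero. -/
theorem x_axis_never_in_support (a b c : Fin 3 → ℝ)
    (hli : LinearIndependent ℝ (fun i : Fin 3 => ![a i, b i, c i]))
    (α β γ : ℝ) (σ : Fin 3 → ℝ)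
    (hnz : ¬ (α = 0 ∧ β = 0 ∧ γ = 0 ∧ σ = 0))
    (hdep : α • (![0,0,1,0,0,0] : Fin 6 → ℝ) + β • ![0,0,0,0,1,0] +
      γ • ![0,0,0,0,0,1] +
      ∑ i, σ i • ![-(a i), a i, a i, b i + c i, b i, c i] = 0) :
    α = 0 := by
  have h1 := congrFun hdep 1
  have h2 := congrFun hdep 2
  simp [Fin.sum_univ_three] at h1 h2
  linarith
end

section
/- In the bowling model, suppose the line L from waist to shoulder coincides with shoulder axis S_i, i.e., the direction (a_i, b_i, c_i) is proportional to (0, −1, 1). Then there is a linear dependency among the six joint-axis Plücker vectors supported exactly on {S_i, Y, Z}: there exist nonzero reals λ, μ, ν with λ·Y + μ·Z + ν·S_i = 0, and every nontrivial dependency among the six vectors is a multiple of this one. -/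
/-!
Write `S u = (-u₀, u₀, u₀, u₁ + u₂, u₁, u₂)` for the Plücker vector of the axis with direction `u`;
it is linear in `u`, so a dependency `α X + β Y + γ Z + ∑ σⱼ Sⱼ = 0` only involves the direction
`u = ∑ σⱼ (aⱼ, bⱼ, cⱼ)`. Reading it coordinatewise forces `α = 0`, `γ = -β` and `u = β (0, -1, 1)`,
which is a multiple of the direction of `Sᵢ`. Linear independence of the directions then leaves
only `σ = (β / t) eᵢ`.
-/

theorem LinearIndependent.eq_single_of_sum_smul_eq_smul {ι R M : Type*} [Fintype ι]
    [DecidableEq ι] [Ring R] [AddCommGroup M] [Module R M] {v : ι → M}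
    (hv : LinearIndependent R v) {σ : ι → R} {i : ι} {s : R}
    (h : ∑ j, σ j • v j = s • v i) : σ = Pi.single i s :=
  hv.fintypeLinearCombination_injective <| by
    rw [Fintype.linearCombination_apply_single, Fintype.linearCombination_apply, h]

section AxisPlucker

variable {R : Type*} [CommRing R]

def axisPlucker : (Fin 3 → R) →ₗ[R] (Fin 6 → R) where
  toFun u := ![-u 0, u 0, u 0, u 1 + u 2, u 1, u 2]
  map_add' u v := by ext m; fin_cases m <;> simp [add_comm, add_add_add_comm]
  map_smul' r u := by ext m; fin_cases m <;> simp [mul_add]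

theorem axisPlucker_vec (x y z : R) : axisPlucker ![x, y, z] = ![-x, x, x, y + z, y, z] := rfl

theorem combination_add_axisPlucker (α β γ : R) (u : Fin 3 → R) :
    α • (![0,0,1,0,0,0] : Fin 6 → R) + β • ![0,0,0,0,1,0] + γ • ![0,0,0,0,0,1] +
        axisPlucker u = ![-u 0, u 0, α + u 0, u 1 + u 2, β + u 1, γ + u 2] := by
  ext m; fin_cases m <;> simp [axisPlucker]

theorem combination_add_axisPlucker_eq_zero_iff (α β γ : R) (u : Fin 3 → R) :
    α • (![0,0,1,0,0,0] : Fin 6 → R) + β • ![0,0,0,0,1,0] + γ • ![0,0,0,0,0,1] +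
        axisPlucker u = 0 ↔
      α = 0 ∧ γ = -β ∧ u = β • ![0, -1, 1] := by
  rw [combination_add_axisPlucker]
  simp only [funext_iff, Fin.forall_fin_succ, Pi.zero_apply, Pi.smul_apply, smul_eq_mul,
    Matrix.cons_val_zero, Matrix.cons_val_succ, IsEmpty.forall_iff, and_true]
  grind

end AxisPlucker

theorem support_when_shoulder_axis_through_waist_general (a b c : Fin 3 → ℝ)
    (hli : LinearIndependent ℝ (fun i : Fin 3 => ![a i, b i, c i]))
    (i : Fin 3) (t : ℝ)
    (ha : a i = 0) (hb : b i = -t) (hc : c i = t) :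
    (∃ lam mu nu : ℝ, lam ≠ 0 ∧ mu ≠ 0 ∧ nu ≠ 0 ∧
      lam • (![0,0,0,0,1,0] : Fin 6 → ℝ) + mu • ![0,0,0,0,0,1] +
        nu • ![-(a i), a i, a i, b i + c i, b i, c i] = 0 ∧
      ∀ α β γ : ℝ, ∀ σ : Fin 3 → ℝ,
        α • (![0,0,1,0,0,0] : Fin 6 → ℝ) + β • ![0,0,0,0,1,0] +
          γ • ![0,0,0,0,0,1] +
          ∑ j, σ j • ![-(a j), a j, a j, b j + c j, b j, c j] = 0 →
        ∃ k : ℝ, α = 0 ∧ β = k * lam ∧ γ = k * mu ∧ σ i = k * nu ∧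
          ∀ j, j ≠ i → σ j = 0) := by
  have hvi : ![a i, b i, c i] = t • ![0, -1, 1] := by
    ext m; fin_cases m <;> simp [ha, hb, hc]
  have ht : t ≠ 0 := by
    rintro rfl
    exact hli.ne_zero i (by simpa using hvi)
  refine ⟨t, -t, 1, ht, neg_ne_zero.mpr ht, one_ne_zero, ?_, ?_⟩
  · simpa [axisPlucker_vec] using
      (combination_add_axisPlucker_eq_zero_iff 0 t (-t) ![a i, b i, c i]).2 ⟨rfl, rfl, hvi⟩
  · intro α β γ σ h
    have h' : α • (![0,0,1,0,0,0] : Fin 6 → ℝ) + β • ![0,0,0,0,1,0] + γ • ![0,0,0,0,0,1] +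
        axisPlucker (∑ j, σ j • ![a j, b j, c j]) = 0 := by
      simpa only [map_sum, map_smul, axisPlucker_vec] using h
    obtain ⟨rfl, rfl, hu⟩ := (combination_add_axisPlucker_eq_zero_iff α β γ _).1 h'
    have hσ : σ = Pi.single i (β / t) :=
      hli.eq_single_of_sum_smul_eq_smul (by rw [hu, hvi, smul_smul, div_mul_cancel₀ _ ht])
    exact ⟨β / t, rfl, by field_simp, by field_simp, by simp [hσ], fun j hj => by simp [hσ, hj]⟩

theorem support_when_shoulder_axis_through_waist (a b c : Fin 3 → ℝ)
    (hli : LinearIndependent ℝ (fun i : Fin 3 => ![a i, b i, c i]))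
    (i : Fin 3) (t : ℝ) (ht : t ≠ 0)
    (ha : a i = 0) (hb : b i = -t) (hc : c i = t) :
    (∃ lam mu nu : ℝ, lam ≠ 0 ∧ mu ≠ 0 ∧ nu ≠ 0 ∧
      lam • (![0,0,0,0,1,0] : Fin 6 → ℝ) + mu • ![0,0,0,0,0,1] +
        nu • ![-(a i), a i, a i, b i + c i, b i, c i] = 0 ∧
      ∀ α β γ : ℝ, ∀ σ : Fin 3 → ℝ,
        α • (![0,0,1,0,0,0] : Fin 6 → ℝ) + β • ![0,0,0,0,1,0] +
          γ • ![0,0,0,0,0,1] +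
          ∑ j, σ j • ![-(a j), a j, a j, b j + c j, b j, c j] = 0 →
        ∃ k : ℝ, α = 0 ∧ β = k * lam ∧ γ = k * mu ∧ σ i = k * nu ∧
          ∀ j, j ≠ i → σ j = 0) :=
  support_when_shoulder_axis_through_waist_general a b c hli i t ha hb hc
end

section
/- In the bowling model, a pure translation along the x-axis, represented by the Plücker vector (0,0,1,0,0,0) of the line at infinity of the yz-plane, lies in the motion space (the column span of the six joint-axis Plücker vectors); in fact it is a linear combination of the Plücker vector Y = (0,0,0,0,1,0) of the y-waist-axis and the Plücker vector of the line through the shoulder point (0,−1,1) parallel to the y-direction. -/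
/-!
The Plücker vectors of lines through the shoulder point form the image of one linear map
`ℝ³ → ℝ⁶`, which also sends `(a_i, b_i, c_i)` to `S_i`; as these vectors span `ℝ³`, every such
line lies in the span of the `S_i`. The x-translation is the line through the shoulder point
parallel to the y-axis minus the y-waist axis `Y`.
-/

def shoulderAxis : (Fin 3 → ℝ) →ₗ[ℝ] (Fin 6 → ℝ) where
  toFun v := ![-(v 0), v 0, v 0, v 1 + v 2, v 1, v 2]
  map_add' v w := by ext i; fin_cases i <;> simp <;> ring
  map_smul' r v := by ext i; fin_cases i <;> simp [mul_add]

lemma plucker_shoulderPoint (p : Fin 4 → ℝ) :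
    plucker p ![0,-1,1,1] = shoulderAxis ![p 0, p 1 + p 3, p 2 - p 3] := by
  ext i; fin_cases i <;> simp [plucker, shoulderAxis]

lemma shoulderAxis_mem_span {ι : Type*} {u : ι → Fin 3 → ℝ}
    (hu : Submodule.span ℝ (Set.range u) = ⊤) (v : Fin 3 → ℝ) :
    shoulderAxis v ∈ Submodule.span ℝ (Set.range (shoulderAxis ∘ u)) := by
  rw [Set.range_comp, Submodule.span_image, hu]
  exact Submodule.mem_map_of_mem Submodule.mem_top

lemma plucker_shoulderPoint_mem_span (a b c : Fin 3 → ℝ)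
    (hli : LinearIndependent ℝ (fun i : Fin 3 => ![a i, b i, c i])) (p : Fin 4 → ℝ) :
    plucker p ![0,-1,1,1] ∈ Submodule.span ℝ
      (Set.range fun i => ![-(a i), a i, a i, b i + c i, b i, c i]) := by
  rw [plucker_shoulderPoint]
  exact shoulderAxis_mem_span (hli.span_eq_top_of_card_eq_finrank (by simp)) _

lemma plucker_translation_x :
    plucker ![0,1,0,0] ![0,0,1,0] =
      plucker ![0,1,0,0] ![0,-1,1,1] - ![0,0,0,0,1,0] := by
  ext i; fin_cases i <;> simp [plucker]

theorem translation_along_x_possible (a b c : Fin 3 → ℝ)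
    (hli : LinearIndependent ℝ (fun i : Fin 3 => ![a i, b i, c i])) :
    plucker ![0,1,0,0] ![0,0,1,0] ∈ Submodule.span ℝ
      ({![0,0,1,0,0,0], ![0,0,0,0,1,0], ![0,0,0,0,0,1],
        ![-(a 0), a 0, a 0, b 0 + c 0, b 0, c 0],
        ![-(a 1), a 1, a 1, b 1 + c 1, b 1, c 1],
        ![-(a 2), a 2, a 2, b 2 + c 2, b 2, c 2]} : Set (Fin 6 → ℝ)) ∧
    ∃ β γ : ℝ, plucker ![0,1,0,0] ![0,0,1,0] =
      β • (![0,0,0,0,1,0] : Fin 6 → ℝ) +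
      γ • plucker ![0,1,0,0] ![0,-1,1,1] := by
  refine ⟨?_, -1, 1, by rw [plucker_translation_x, neg_one_smul, one_smul, sub_eq_neg_add]⟩
  rw [plucker_translation_x]
  refine Submodule.sub_mem _ ?_ (Submodule.subset_span (by simp))
  refine Submodule.span_mono ?_ (plucker_shoulderPoint_mem_span a b c hli _)
  rintro _ ⟨i, rfl⟩
  fin_cases i <;> simp
end
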